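/- arXiv:2008.03494 — 4 statements merged into one kernel-verified Lean document; each statement's English description precedes it below -/
import Mathlib

section
/- Let G be a totally ordered abelian group (written multiplicatively with identity e) and H a convex subgroup of G. If g, h ∈ G satisfy g·h⁻¹ ∈ G² (i.e. g and h have the same class mod squares) and g·h⁻¹ ∈ H, then g·h⁻¹ ∈ H², i.e. g and h have the same class modulo H². -/
theorem Subgroup.mem_of_pow_mem_of_convex {G : Type*} [CommGroup G] [LinearOrder G]
    [IsOrderedMonoid G] (H : Subgroup G) (hconv : ∀ ⦃g h : G⦄, h ∈ H → 1 ≤ g → g ≤ h → g ∈ H)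
    {u : G} {n : ℕ} (hn : n ≠ 0) (hu : u ^ n ∈ H) : u ∈ H := by
  have habs_pow : |u|ₘ ^ n ∈ H := mabs_pow n u ▸ mabs_mem_iff.2 hu
  exact mabs_mem_iff.1 <| hconv habs_pow (one_le_mabs u) (le_self_pow (one_le_mabs u) hn)

theorem stmt0 {G : Type*} [CommGroup G] [LinearOrder G] [IsOrderedMonoid G] (H : Subgroup G)
    (hconv : ∀ ⦃g h : G⦄, h ∈ H → 1 ≤ g → g ≤ h → g ∈ H)
    (g h : G) (hsq : ∃ u : G, g * h⁻¹ = u ^ 2) (hH : g * h⁻¹ ∈ H) :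
    ∃ u ∈ H, g * h⁻¹ = u ^ 2 := by
  obtain ⟨u, hu⟩ := hsq
  exact ⟨u, H.mem_of_pow_mem_of_convex hconv two_ne_zero (hu ▸ hH), hu⟩
end

section
/- Let G be a totally ordered abelian group with identity e and H a convex subgroup. Let g₁, g₂, h ∈ G with g₁·g₂⁻¹ ∈ H², h·g₁⁻¹ ∈ G², and h·g₁⁻¹ ∉ H². If h > g₁ then h > g₂, and if h < g₁ then h < g₂. -/
/-! Write `h g₁⁻¹ = v²` and `g₁ g₂⁻¹ = u²` with `u ∈ H`, so that `h g₂⁻¹ = (v u)²`. Since `v ∉ H`,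
convexity makes `v` larger in absolute value than every element of `H`, so multiplying `v` by
`u ∈ H` cannot change its sign; squaring preserves signs in a linearly ordered group. -/

section ConvexSubgroup

variable {G : Type*} [CommGroup G] [LinearOrder G] [IsOrderedMonoid G] {H : Subgroup G}
  {u v : G}

omit [IsOrderedMonoid G] in
lemma lt_of_one_lt_of_notMem_convex (hconv : ∀ ⦃g h : G⦄, h ∈ H → 1 ≤ g → g ≤ h → g ∈ H)
    (hv : 1 < v) (hvH : v ∉ H) (hu : u ∈ H) : u < v :=
  lt_of_not_ge fun hvu => hvH (hconv hu hv.le hvu)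

lemma one_lt_mul_of_one_lt_of_notMem_convex
    (hconv : ∀ ⦃g h : G⦄, h ∈ H → 1 ≤ g → g ≤ h → g ∈ H)
    (hv : 1 < v) (hvH : v ∉ H) (hu : u ∈ H) : 1 < v * u :=
  inv_lt_iff_one_lt_mul.mp (lt_of_one_lt_of_notMem_convex hconv hv hvH (H.inv_mem hu))

lemma mul_lt_one_of_lt_one_of_notMem_convex
    (hconv : ∀ ⦃g h : G⦄, h ∈ H → 1 ≤ g → g ≤ h → g ∈ H)
    (hv : v < 1) (hvH : v ∉ H) (hu : u ∈ H) : v * u < 1 := by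
  have := one_lt_mul_of_one_lt_of_notMem_convex hconv (one_lt_inv'.mpr hv)
    (fun h => hvH (by simpa using H.inv_mem h)) (H.inv_mem hu)
  rwa [← mul_inv, one_lt_inv'] at this

end ConvexSubgroup

theorem stmt1 {G : Type*} [CommGroup G] [LinearOrder G] [IsOrderedMonoid G] (H : Subgroup G)
    (hconv : ∀ ⦃g h : G⦄, h ∈ H → 1 ≤ g → g ≤ h → g ∈ H)
    (g₁ g₂ h : G)
    (h12 : ∃ u ∈ H, g₁ * g₂⁻¹ = u ^ 2)
    (hG2 : ∃ u : G, h * g₁⁻¹ = u ^ 2)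
    (hnH2 : ¬ ∃ u ∈ H, h * g₁⁻¹ = u ^ 2) :
    (g₁ < h → g₂ < h) ∧ (h < g₁ → h < g₂) := by
  obtain ⟨u, huH, hu⟩ := h12
  obtain ⟨v, hv⟩ := hG2
  have hvH : v ∉ H := fun hvH => hnH2 ⟨v, hvH, hv⟩
  have hsq : h * g₂⁻¹ = (v * u) ^ 2 := by
    rw [mul_pow, ← hv, ← hu]
    group
  constructor
  · intro hlt
    have hv1 : 1 < v := (one_lt_pow_iff two_ne_zero).mp (hv ▸ lt_mul_inv_iff_lt.mpr hlt)
    have hvu : 1 < (v * u) ^ 2 := (one_lt_pow_iff two_ne_zero).mpr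
      (one_lt_mul_of_one_lt_of_notMem_convex hconv hv1 hvH huH)
    exact lt_mul_inv_iff_lt.mp (hsq ▸ hvu)
  · intro hlt
    have hv1 : v < 1 := (pow_lt_one_iff two_ne_zero).mp (hv ▸ mul_inv_lt_one_iff.mpr hlt)
    have hvu : (v * u) ^ 2 < 1 := (pow_lt_one_iff two_ne_zero).mpr
      (mul_lt_one_of_lt_one_of_notMem_convex hconv hv1 hvH huH)
    exact mul_inv_lt_one_iff.mp (hsq ▸ hvu)
end

section
/- Let (K, val) be a valued field whose residue field F has characteristic ≠ 2 and in which every strict unit admits a square root. If an : Kˣ → Fˣ is a group homomorphism whose restriction to the units Bˣ of the valuation ring equals the residue map π, then: (i) for every g ∈ G and nonzero c ∈ F there is w ∈ Kˣ with val(w) = g and an(w) = c; (ii) for nonzero x₁, x₂ with x₁ + x₂ ≠ 0, if val(x₁) < val(x₂) then an(x₁+x₂) = an(x₁), and if val(x₁) = val(x₂) and an(x₁) + an(x₂) ≠ 0 then val(x₁+x₂) = val(x₁) and an(x₁+x₂) = an(x₁) + an(x₂); (iii) for x, y ∈ Kˣ with val(x)·val(y)⁻¹ ∈ G² and an(x)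 = an(y), there exists u ∈ Kˣ with y = u²x. -/
/-- A (multiplicatively written) valuation on a field `K` with value group `G`:
`v` is multiplicative and satisfies the ultrametric inequality on nonzero elements,
and is surjective onto `G`.  The value at `0` is irrelevant (the paper's `∞`). -/
structure MulValuation (K : Type*) [Field K] (G : Type*) [CommGroup G] [LinearOrder G] [IsOrderedMonoid G] where
  v : K → G
  map_mul : ∀ ⦃x y : K⦄, x ≠ 0 → y ≠ 0 → v (x * y) = v x * v y
  min_le_map_add : ∀ ⦃x y : K⦄, x ≠ 0 → y ≠ 0 → x + y ≠ 0 → min (v x) (v y) ≤ v (x + y)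
  surj : ∀ g : G, ∃ x : K, x ≠ 0 ∧ v x = g

namespace MulValuation

variable {K : Type*} [Field K] {G : Type*} [CommGroup G] [LinearOrder G] [IsOrderedMonoid G]

/-- The valuation ring `B = {x : val x ≥ e} ∪ {0}`, as a set. -/
def ringSet (V : MulValuation K G) : Set K := {x : K | x = 0 ∨ 1 ≤ V.v x}

/-- `val(Aˣ)`: the set of values of units of a subring `A` of `K`. -/
def unitVals (V : MulValuation K G) (A : Subring K) : Set G :=
  {g : G | ∃ x : K, x ≠ 0 ∧ x ∈ A ∧ x⁻¹ ∈ A ∧ V.v x = g}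

end MulValuation

/-- `π : K → F` is a residue homomorphism for `V`: it is a surjective ring
homomorphism on the valuation ring, whose nonvanishing locus on the valuation ring
is exactly the set of units of the valuation ring. -/
def MulValuation.IsResidue {K : Type*} [Field K] {G : Type*} [CommGroup G] [LinearOrder G] [IsOrderedMonoid G]
    {F : Type*} [Field F] (V : MulValuation K G) (π : K → F) : Prop :=
  π 0 = 0 ∧ π 1 = 1 ∧
  (∀ x y : K, x ∈ V.ringSet → y ∈ V.ringSet → π (x + y) = π x + π y) ∧
  (∀ x y : K, x ∈ V.ringSet → y ∈ V.ringSet → π (x * y) = π x * π y) ∧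
  (∀ x : K, x ≠ 0 → x ∈ V.ringSet → (π x ≠ 0 ↔ V.v x = 1)) ∧
  (∀ c : F, ∃ x ∈ V.ringSet, π x = c)

/-!
Every nonzero sum factors as `x₁ + x₂ = x₁ * (1 + x₂ / x₁)`, and when `val t ≥ 1` the element
`1 + t` lies in the valuation ring with residue `1 + π t`; if that residue is nonzero, `1 + t`
is a unit, so its angular component is `1 + π t`. This gives (ii). For (i), multiply an element
of value `g` by a unit of the right residue. For (iii), dividing `y / x` by the square of an
element of value `u⁻¹` and angular component `1` leaves a strict unit, which is a square.
-/

namespace MulValuation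

variable {K : Type*} [Field K] {G : Type*} [CommGroup G] [LinearOrder G] [IsOrderedMonoid G]
  {F : Type*} [Field F] (V : MulValuation K G)

theorem map_one : V.v 1 = 1 := by
  have h := V.map_mul (one_ne_zero (α := K)) one_ne_zero
  rwa [mul_one, left_eq_mul] at h

theorem map_div {x y : K} (hx : x ≠ 0) (hy : y ≠ 0) : V.v (x / y) = V.v x / V.v y := by
  have h := V.map_mul (div_ne_zero hx hy) hy
  rw [div_mul_cancel₀ x hy] at h
  exact eq_div_of_mul_eq' h.symm

theorem one_le_val_one_add {t : K} (ht : t ≠ 0) (h1t : 1 + t ≠ 0) (hge : 1 ≤ V.v t) :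
    1 ≤ V.v (1 + t) := by
  simpa [V.map_one, hge] using V.min_le_map_add one_ne_zero ht h1t

variable {V} {π : K → F}

theorem IsResidue.residue_eq_zero_of_one_lt (hres : V.IsResidue π) {t : K} (ht : t ≠ 0)
    (hlt : 1 < V.v t) : π t = 0 := by
  obtain ⟨-, -, -, -, hunit, -⟩ := hres
  by_contra hπt
  exact hlt.ne' ((hunit t ht (Or.inr hlt.le)).mp hπt)

theorem IsResidue.val_one_add_eq_one (hres : V.IsResidue π) {t : K} (ht : t ≠ 0)
    (h1t : 1 + t ≠ 0) (hge : 1 ≤ V.v t) (hπ : 1 + π t ≠ 0) :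
    V.v (1 + t) = 1 ∧ π (1 + t) = 1 + π t := by
  obtain ⟨-, hπ1, hadd, -, hunit, -⟩ := hres
  have hπ1t : π (1 + t) = 1 + π t := by
    rw [hadd 1 t (Or.inr V.map_one.ge) (Or.inr hge), hπ1]
  refine ⟨(hunit _ h1t (Or.inr (V.one_le_val_one_add ht h1t hge))).mp ?_, hπ1t⟩
  rwa [hπ1t]

theorem IsResidue.exists_val_eq_one_residue_eq (hres : V.IsResidue π) {c : F} (hc : c ≠ 0) :
    ∃ b : K, b ≠ 0 ∧ V.v b = 1 ∧ π b = c := by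
  obtain ⟨hπ0, -, -, -, hunit, hsurj⟩ := hres
  obtain ⟨b, hbB, rfl⟩ := hsurj c
  have hb : b ≠ 0 := by rintro rfl; exact hc hπ0
  exact ⟨b, hb, (hunit b hb hbB).mp hc, rfl⟩

private theorem add_eq_mul_one_add_div {x₁ : K} (x₂ : K) (hx₁ : x₁ ≠ 0) :
    x₁ + x₂ = x₁ * (1 + x₂ / x₁) := by
  field_simp

/-- An angular component map: the restriction to `K ∖ {0}` of a homomorphism `Kˣ → Fˣ`
that agrees with the residue map on the units of the valuation ring. -/
structure IsAngularComponent (V : MulValuation K G) (π an : K → F) : Prop where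
  ne_zero : ∀ ⦃x : K⦄, x ≠ 0 → an x ≠ 0
  map_mul : ∀ ⦃x y : K⦄, x ≠ 0 → y ≠ 0 → an (x * y) = an x * an y
  eq_residue : ∀ ⦃x : K⦄, x ≠ 0 → V.v x = 1 → an x = π x

namespace IsAngularComponent

variable {an : K → F} (han : IsAngularComponent V π an)
include han

theorem map_div {x y : K} (hx : x ≠ 0) (hy : y ≠ 0) : an (x / y) = an x / an y := by
  have h := han.map_mul (div_ne_zero hx hy) hy
  rw [div_mul_cancel₀ x hy] at h
  exact eq_div_of_mul_eq (han.ne_zero hy) h.symm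

theorem exists_val_eq_an_eq (hres : V.IsResidue π) (g : G) {c : F} (hc : c ≠ 0) :
    ∃ w : K, w ≠ 0 ∧ V.v w = g ∧ an w = c := by
  obtain ⟨x, hx, rfl⟩ := V.surj g
  obtain ⟨b, hb, hvb, hπb⟩ :=
    hres.exists_val_eq_one_residue_eq (div_ne_zero hc (han.ne_zero hx))
  refine ⟨b * x, mul_ne_zero hb hx, by rw [V.map_mul hb hx, hvb, one_mul], ?_⟩
  rw [han.map_mul hb hx, han.eq_residue hb hvb, hπb, div_mul_cancel₀ c (han.ne_zero hx)]

theorem one_add (hres : V.IsResidue π) {t : K} (ht : t ≠ 0) (h1t : 1 + t ≠ 0)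
    (hge : 1 ≤ V.v t) (hπ : 1 + π t ≠ 0) : V.v (1 + t) = 1 ∧ an (1 + t) = 1 + π t := by
  obtain ⟨hv, hπ1t⟩ := hres.val_one_add_eq_one ht h1t hge hπ
  exact ⟨hv, by rw [han.eq_residue h1t hv, hπ1t]⟩

theorem an_add_of_val_lt (hres : V.IsResidue π) {x₁ x₂ : K} (hx₁ : x₁ ≠ 0) (hx₂ : x₂ ≠ 0)
    (hsum : x₁ + x₂ ≠ 0) (hlt : V.v x₁ < V.v x₂) : an (x₁ + x₂) = an x₁ := by
  have ht := div_ne_zero hx₂ hx₁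
  have hfac := add_eq_mul_one_add_div x₂ hx₁
  have h1t : 1 + x₂ / x₁ ≠ 0 := right_ne_zero_of_mul (hfac ▸ hsum)
  have hvt : 1 < V.v (x₂ / x₁) := by rwa [V.map_div hx₂ hx₁, one_lt_div']
  have hπt := hres.residue_eq_zero_of_one_lt ht hvt
  obtain ⟨-, han1t⟩ := han.one_add hres ht h1t hvt.le (by simp [hπt])
  rw [hfac, han.map_mul hx₁ h1t, han1t, hπt, add_zero, mul_one]

theorem val_add_an_add_of_val_eq (hres : V.IsResidue π) {x₁ x₂ : K} (hx₁ : x₁ ≠ 0)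
    (hx₂ : x₂ ≠ 0) (hsum : x₁ + x₂ ≠ 0) (hv : V.v x₁ = V.v x₂) (hane : an x₁ + an x₂ ≠ 0) :
    V.v (x₁ + x₂) = V.v x₁ ∧ an (x₁ + x₂) = an x₁ + an x₂ := by
  have ht := div_ne_zero hx₂ hx₁
  have hfac := add_eq_mul_one_add_div x₂ hx₁
  have h1t : 1 + x₂ / x₁ ≠ 0 := right_ne_zero_of_mul (hfac ▸ hsum)
  have hvt : V.v (x₂ / x₁) = 1 := by rw [V.map_div hx₂ hx₁, hv, div_self']
  have han₁ := han.ne_zero hx₁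
  have hπt : π (x₂ / x₁) = an x₂ / an x₁ := by
    rw [← han.eq_residue ht hvt, han.map_div hx₂ hx₁]
  have hπ : 1 + π (x₂ / x₁) ≠ 0 := by
    rwa [hπt, one_add_div han₁, div_ne_zero_iff, and_iff_left han₁]
  obtain ⟨hv1t, han1t⟩ := han.one_add hres ht h1t hvt.ge hπ
  rw [hfac, V.map_mul hx₁ h1t, hv1t, mul_one, han.map_mul hx₁ h1t, han1t, hπt, mul_add,
    mul_one, mul_div_cancel₀ _ han₁]
  exact ⟨rfl, rfl⟩

theorem exists_eq_sq_mul_of_an_eq (hres : V.IsResidue π)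
    (hsqrt : ∀ x : K, x ≠ 0 → V.v x = 1 → π x = 1 → ∃ y : K, x = y ^ 2)
    {x y : K} (hx : x ≠ 0) (hy : y ≠ 0) {u : G} (hu : V.v x * (V.v y)⁻¹ = u ^ 2)
    (hxy : an x = an y) : ∃ s : K, s ≠ 0 ∧ y = s ^ 2 * x := by
  obtain ⟨w, hw, hvw, hanw⟩ := han.exists_val_eq_an_eq hres u⁻¹ one_ne_zero
  have hw2x : w * w * x ≠ 0 := mul_ne_zero (mul_ne_zero hw hw) hx
  have hz : y / (w * w * x) ≠ 0 := div_ne_zero hy hw2x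
  have hvz : V.v (y / (w * w * x)) = 1 := by
    rw [V.map_div hy hw2x, V.map_mul (mul_ne_zero hw hw) hx, V.map_mul hw hw, hvw,
      mul_inv_eq_iff_eq_mul.mp hu, div_eq_one]
    group
  have hπz : π (y / (w * w * x)) = 1 := by
    rw [← han.eq_residue hz hvz, han.map_div hy hw2x, han.map_mul (mul_ne_zero hw hw) hx,
      han.map_mul hw hw, hanw, hxy, one_mul, one_mul, div_self (han.ne_zero hy)]
  obtain ⟨s, hs⟩ := hsqrt _ hz hvz hπz
  have hs0 : s ≠ 0 := by rintro rfl; exact hz (by simpa using hs)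
  refine ⟨s * w, mul_ne_zero hs0 hw, ?_⟩
  rw [mul_pow, ← hs]
  field_simp

end IsAngularComponent

end MulValuation

theorem stmt8_general {K : Type*} [Field K] {G : Type*} [CommGroup G] [LinearOrder G] [IsOrderedMonoid G]
    {F : Type*} [Field F] (V : MulValuation K G) (π : K → F)
    (hres : V.IsResidue π)
    (hsqrt : ∀ x : K, x ≠ 0 → V.v x = 1 → π x = 1 → ∃ y : K, x = y ^ 2)
    (an : K → F)
    (han0 : ∀ x : K, x ≠ 0 → an x ≠ 0)
    (hanmul : ∀ x y : K, x ≠ 0 → y ≠ 0 → an (x * y) = an x * an y)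
    (hanres : ∀ x : K, x ≠ 0 → V.v x = 1 → an x = π x) :
    -- (i)
    (∀ (g : G) (c : F), c ≠ 0 → ∃ w : K, w ≠ 0 ∧ V.v w = g ∧ an w = c) ∧
    -- (ii)
    (∀ x₁ x₂ : K, x₁ ≠ 0 → x₂ ≠ 0 → x₁ + x₂ ≠ 0 →
      (V.v x₁ < V.v x₂ → an (x₁ + x₂) = an x₁) ∧
      (V.v x₁ = V.v x₂ → an x₁ + an x₂ ≠ 0 →
        V.v (x₁ + x₂) = V.v x₁ ∧ an (x₁ + x₂) = an x₁ + an x₂)) ∧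
    -- (iii)
    (∀ x y : K, x ≠ 0 → y ≠ 0 → (∃ u : G, V.v x * (V.v y)⁻¹ = u ^ 2) → an x = an y →
      ∃ u : K, u ≠ 0 ∧ y = u ^ 2 * x) := by
  have han : V.IsAngularComponent π an := ⟨han0, hanmul, hanres⟩
  refine ⟨fun g c hc => han.exists_val_eq_an_eq hres g hc, ?_, ?_⟩
  · intro x₁ x₂ hx₁ hx₂ hsum
    exact ⟨han.an_add_of_val_lt hres hx₁ hx₂ hsum,
      han.val_add_an_add_of_val_eq hres hx₁ hx₂ hsum⟩
  · rintro x y hx hy ⟨u, hu⟩ hxy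
    exact han.exists_eq_sq_mul_of_an_eq hres hsqrt hx hy hu hxy

theorem stmt8 {K : Type*} [Field K] {G : Type*} [CommGroup G] [LinearOrder G] [IsOrderedMonoid G]
    {F : Type*} [Field F] (V : MulValuation K G) (π : K → F)
    (hres : V.IsResidue π) (hchar : (2 : F) ≠ 0)
    (hsqrt : ∀ x : K, x ≠ 0 → V.v x = 1 → π x = 1 → ∃ y : K, x = y ^ 2)
    (an : K → F)
    (han0 : ∀ x : K, x ≠ 0 → an x ≠ 0)
    (hanmul : ∀ x y : K, x ≠ 0 → y ≠ 0 → an (x * y) = an x * an y)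
    (hanres : ∀ x : K, x ≠ 0 → V.v x = 1 → an x = π x) :
    -- (i)
    (∀ (g : G) (c : F), c ≠ 0 → ∃ w : K, w ≠ 0 ∧ V.v w = g ∧ an w = c) ∧
    -- (ii)
    (∀ x₁ x₂ : K, x₁ ≠ 0 → x₂ ≠ 0 → x₁ + x₂ ≠ 0 →
      (V.v x₁ < V.v x₂ → an (x₁ + x₂) = an x₁) ∧
      (V.v x₁ = V.v x₂ → an x₁ + an x₂ ≠ 0 →
        V.v (x₁ + x₂) = V.v x₁ ∧ an (x₁ + x₂) = an x₁ + an x₂)) ∧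
    -- (iii)
    (∀ x y : K, x ≠ 0 → y ≠ 0 → (∃ u : G, V.v x * (V.v y)⁻¹ = u ^ 2) → an x = an y →
      ∃ u : K, u ≠ 0 ∧ y = u ^ 2 * x) :=
  stmt8_general V π hres hsqrt an han0 hanmul hanres
end

section
/- Let M₁ and M₂ be proper quasi-quadratic modules in a field E of characteristic ≠ 2 (proper meaning Mᵢ ≠ E). If M₁ + M₂ = E, then there exists a nonzero c ∈ E with c ∈ M₁ and −c ∈ M₂. -/
/-- The identity `y = ((y/c + 1)/2)² c + ((y/c - 1)/2)² (-c)` writes every element as a sum of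
square multiples of `c` and `-c`. -/
theorem eq_univ_of_mem_of_neg_mem {E : Type*} [Field E] (h2 : (2 : E) ≠ 0) {M : Set E}
    (hadd : ∀ x ∈ M, ∀ y ∈ M, x + y ∈ M) (hsq : ∀ a : E, ∀ x ∈ M, a ^ 2 * x ∈ M)
    {c : E} (hc : c ≠ 0) (hcM : c ∈ M) (hnegcM : -c ∈ M) : M = Set.univ := by
  refine Set.eq_univ_of_forall fun y => ?_
  have hy : ((y / c + 1) / 2) ^ 2 * c + ((y / c - 1) / 2) ^ 2 * (-c) = y := by
    field_simp
    ring
  exact hy ▸ hadd _ (hsq _ c hcM) _ (hsq _ (-c) hnegcM)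

theorem exists_ne_zero_mem_right_of_forall_eq_add {E : Type*} [AddMonoid E] {M₁ M₂ : Set E}
    (hp1 : M₁ ≠ Set.univ) (hsum : ∀ x : E, ∃ a ∈ M₁, ∃ b ∈ M₂, x = a + b) :
    ∃ b ∈ M₂, b ≠ 0 := by
  obtain ⟨s, hs⟩ := (Set.ne_univ_iff_exists_notMem M₁).mp hp1
  obtain ⟨a, ha, b, hb, rfl⟩ := hsum s
  refine ⟨b, hb, ?_⟩
  rintro rfl
  exact hs (by simpa using ha)

theorem stmt12_general {E : Type*} [Field E] (h2 : (2 : E) ≠ 0)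
    (M₁ M₂ : Set E)
    (hadd2 : ∀ x ∈ M₂, ∀ y ∈ M₂, x + y ∈ M₂)
    (hsq2 : ∀ a : E, ∀ x ∈ M₂, a ^ 2 * x ∈ M₂)
    (hp1 : M₁ ≠ Set.univ) (hp2 : M₂ ≠ Set.univ)
    (hsum : ∀ x : E, ∃ a ∈ M₁, ∃ b ∈ M₂, x = a + b) :
    ∃ c : E, c ≠ 0 ∧ c ∈ M₁ ∧ -c ∈ M₂ := by
  obtain ⟨b, hb, hb0⟩ := exists_ne_zero_mem_right_of_forall_eq_add hp1 hsum
  obtain ⟨c, hc, b', hb', hnegb⟩ := hsum (-b)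
  have hc0 : c ≠ 0 := by
    rintro rfl
    rw [zero_add] at hnegb
    exact hp2 (eq_univ_of_mem_of_neg_mem h2 hadd2 hsq2 hb0 hb (hnegb ▸ hb'))
  have hnegc : -c = b + b' := by linear_combination hnegb
  exact ⟨c, hc0, hc, hnegc ▸ hadd2 _ hb _ hb'⟩

theorem stmt12 {E : Type*} [Field E] (h2 : (2 : E) ≠ 0)
    (M₁ M₂ : Set E)
    (h01 : (0 : E) ∈ M₁) (hadd1 : ∀ x ∈ M₁, ∀ y ∈ M₁, x + y ∈ M₁)
    (hsq1 : ∀ a : E, ∀ x ∈ M₁, a ^ 2 * x ∈ M₁)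
    (h02 : (0 : E) ∈ M₂) (hadd2 : ∀ x ∈ M₂, ∀ y ∈ M₂, x + y ∈ M₂)
    (hsq2 : ∀ a : E, ∀ x ∈ M₂, a ^ 2 * x ∈ M₂)
    (hp1 : M₁ ≠ Set.univ) (hp2 : M₂ ≠ Set.univ)
    (hsum : ∀ x : E, ∃ a ∈ M₁, ∃ b ∈ M₂, x = a + b) :
    ∃ c : E, c ≠ 0 ∧ c ∈ M₁ ∧ -c ∈ M₂ :=
  stmt12_general h2 M₁ M₂ hadd2 hsq2 hp1 hp2 hsum
end
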